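/- arXiv:1310.1281 — 3 statements merged into one kernel-verified Lean document; each statement's English description precedes it below -/
import Mathlib

section
/- Let k be a field, n a natural number, and Δ a simplicial complex on Fin n (a set of finsets of Fin n closed under taking subsets). Let I_Δ be the Stanley-Reisner ideal of Δ, i.e. the ideal of MvPolynomial (Fin n) k generated by {mon N : N ∉ Δ}. Then for every finset F of Fin n, F ∈ Δ if and only if mon F ∉ I_Δ. (The Stanley-Reisner complex of the Stanley-Reisner ideal of Δ is Δ itself.) -/
/-- The squarefree monomial `∏ i ∈ F, X i` associated to a finset `F` of `Fin n`. -/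
noncomputable def mon (k : Type*) [Field k] (n : ℕ) (F : Finset (Fin n)) :
    MvPolynomial (Fin n) k :=
  ∏ i ∈ F, MvPolynomial.X i

/-!
A monomial lies in an ideal spanned by monomials exactly when one of the generators divides it,
and the squarefree monomial of `N` divides that of `F` exactly when `N ⊆ F`. So `mon F ∈ I_Δ`
iff `F` contains a non-face, which for a complex closed under subsets means `F ∉ Δ`.
-/

theorem Multiset.toFinsupp_le_toFinsupp {α : Type*} [DecidableEq α] {s t : Multiset α} :
    Multiset.toFinsupp s ≤ Multiset.toFinsupp t ↔ s ≤ t := by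
  rw [← Finsupp.coe_orderIsoMultiset_symm, OrderIso.le_iff_le]

namespace MvPolynomial

variable {σ R : Type*} [CommSemiring R]

theorem monomial_mem_ideal_span_monomial_image {s : Set (σ →₀ ℕ)} {m : σ →₀ ℕ} {a : R}
    (ha : a ≠ 0) :
    monomial m a ∈ Ideal.span ((fun s => monomial s (1 : R)) '' s) ↔ ∃ si ∈ s, si ≤ m := by
  classical
  simp only [mem_ideal_span_monomial_image, support_monomial, if_neg ha, Finset.mem_singleton,
    forall_eq]

theorem prod_X_eq_monomial_toFinsupp [DecidableEq σ] (F : Finset σ) :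
    ∏ i ∈ F, X i = monomial (Multiset.toFinsupp F.val) (1 : R) := by
  rw [monomial_eq, C_1, one_mul, Finsupp.prod, Multiset.toFinsupp_support, Finset.val_toFinset]
  refine Finset.prod_congr rfl fun i hi => ?_
  rw [Multiset.toFinsupp_apply, Multiset.count_eq_one_of_mem F.nodup hi, pow_one]

end MvPolynomial

open MvPolynomial

theorem mon_mem_ideal_span_mon_image_iff (k : Type*) [Field k] {n : ℕ}
    {S : Set (Finset (Fin n))} {F : Finset (Fin n)} :
    mon k n F ∈ Ideal.span (mon k n '' S) ↔ ∃ N ∈ S, N ⊆ F := by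
  have hmon : mon k n = fun F => monomial (Multiset.toFinsupp F.val) 1 :=
    funext prod_X_eq_monomial_toFinsupp
  rw [hmon, ← Set.image_image (fun s => monomial s (1 : k)),
    monomial_mem_ideal_span_monomial_image one_ne_zero]
  simp only [Set.exists_mem_image, Multiset.toFinsupp_le_toFinsupp, Finset.val_le_iff]

theorem mem_complex_iff_mon_not_mem_stanleyReisner_ideal (k : Type*) [Field k] (n : ℕ)
    (Δ : Set (Finset (Fin n))) (hΔ : ∀ A ∈ Δ, ∀ B ⊆ A, B ∈ Δ)
    (F : Finset (Fin n)) :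
    F ∈ Δ ↔ mon k n F ∉ Ideal.span (mon k n '' {N | N ∉ Δ}) := by
  rw [mon_mem_ideal_span_mon_image_iff]
  constructor
  · rintro hF ⟨N, hN, hNF⟩
    exact hN (hΔ F hF N hNF)
  · intro h
    by_contra hF
    exact h ⟨F, hF, subset_rfl⟩
end

section
/- Let k be a field and n a natural number. For every ideal I of MvPolynomial (Fin n) k that is generated by squarefree monomials (i.e. I = ideal⟨mon T : T ∈ 𝒢⟩ for some set 𝒢 of finsets of Fin n), there exists a unique antichain A of finsets of Fin n such that I = ideal⟨mon T : T ∈ A⟩. (The facet complex and facet ideal operators give a bijection between squarefree monomial ideals in n variables and simplicial complexes, specified by their facets, on n vertices.) -/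
open MvPolynomial

noncomputable def ind {n : ℕ} (F : Finset (Fin n)) : Fin n →₀ ℕ := ∑ i ∈ F, Finsupp.single i 1

lemma ind_apply {n : ℕ} (F : Finset (Fin n)) (a : Fin n) :
    ind F a = if a ∈ F then 1 else 0 := by
  classical
  simp [ind, Finsupp.finset_sum_apply, Finsupp.single_apply, Finset.sum_ite_eq' F a (fun _ => 1)]

lemma ind_le_ind_iff {n : ℕ} {S T : Finset (Fin n)} : ind S ≤ ind T ↔ S ⊆ T := by
  constructor
  · intro h a ha
    have := h a
    rw [ind_apply, ind_apply] at this
    simp [ha] at this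
    split_ifs at this with h'
    · exact h'
    · omega
  · intro h a
    rw [ind_apply, ind_apply]
    split_ifs with h1 h2
    · rfl
    · exact absurd (h h1) h2
    · omega
    · rfl

lemma mon_eq (k : Type*) [Field k] (n : ℕ) (F : Finset (Fin n)) :
    mon k n F = monomial (ind F) (1 : k) := by
  rw [mon, ind, monomial_sum_one]
  simp [X]

lemma mon_mem_iff (k : Type*) [Field k] (n : ℕ) (T : Finset (Fin n))
    (A : Set (Finset (Fin n))) :
    mon k n T ∈ Ideal.span (mon k n '' A) ↔ ∃ S ∈ A, S ⊆ T := by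
  have himg : mon k n '' A = (fun s => monomial s (1:k)) '' (ind '' A) := by
    rw [Set.image_image]; exact Set.image_congr fun F _ => mon_eq k n F
  rw [himg, mem_ideal_span_monomial_image]
  constructor
  · intro h
    obtain ⟨si, hsi, hle⟩ := h (ind T) (by
      rw [mon_eq, mem_support_iff, coeff_monomial, if_pos rfl]; exact one_ne_zero)
    obtain ⟨S, hS, rfl⟩ := hsi
    exact ⟨S, hS, ind_le_ind_iff.mp hle⟩
  · rintro ⟨S, hS, hsub⟩ xi hxi
    rw [mon_eq] at hxi
    rw [mem_support_iff, coeff_monomial] at hxi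
    have : xi = ind T := by by_contra h; rw [if_neg (fun e => h e.symm)] at hxi; exact hxi rfl
    subst this
    exact ⟨ind S, ⟨S, hS, rfl⟩, ind_le_ind_iff.mpr hsub⟩

lemma exists_min {n : ℕ} (𝒢 : Set (Finset (Fin n))) :
    ∀ T, T ∈ 𝒢 → ∃ S ∈ 𝒢, S ⊆ T ∧ ∀ U ∈ 𝒢, U ⊆ S → U = S := by
  intro T
  induction T using Finset.strongInductionOn with
  | _ T ih =>
    intro hT
    by_cases h : ∀ U ∈ 𝒢, U ⊆ T → U = T
    · exact ⟨T, hT, subset_rfl, h⟩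
    · push_neg at h
      obtain ⟨U, hU, hUT, hne⟩ := h
      obtain ⟨S, hS, hsub, hmin⟩ := ih U (ssubset_of_subset_of_ne hUT hne) hU
      exact ⟨S, hS, hsub.trans hUT, hmin⟩

lemma antichain_span_subset (k : Type*) [Field k] (n : ℕ)
    {A B : Set (Finset (Fin n))} (hA : IsAntichain (· ⊆ ·) A)
    (h : Ideal.span (mon k n '' A) = Ideal.span (mon k n '' B)) : A ⊆ B := by
  intro T hT
  have h1 : mon k n T ∈ Ideal.span (mon k n '' B) := by
    rw [← h]; exact Ideal.subset_span ⟨T, hT, rfl⟩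
  obtain ⟨S, hS, hST⟩ := (mon_mem_iff k n T B).mp h1
  have h2 : mon k n S ∈ Ideal.span (mon k n '' A) := by
    rw [h]; exact Ideal.subset_span ⟨S, hS, rfl⟩
  obtain ⟨U, hU, hUS⟩ := (mon_mem_iff k n S A).mp h2
  have hUT : U = T := by
    by_contra hne
    exact hA hU hT hne (hUS.trans hST)
  have : S = T := subset_antisymm hST (hUT ▸ hUS)
  exact this ▸ hS

theorem squarefree_monomial_ideal_unique_antichain_generators (k : Type*) [Field k] (n : ℕ)
    (I : Ideal (MvPolynomial (Fin n) k))
    (hI : ∃ 𝒢 : Set (Finset (Fin n)), I = Ideal.span (mon k n '' 𝒢)) :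
    ∃! A : Set (Finset (Fin n)),
      IsAntichain (· ⊆ ·) A ∧ I = Ideal.span (mon k n '' A) := by
  classical
  obtain ⟨𝒢, rfl⟩ := hI
  set A : Set (Finset (Fin n)) := {T | T ∈ 𝒢 ∧ ∀ S ∈ 𝒢, S ⊆ T → S = T} with hAdef
  have hAanti : IsAntichain (· ⊆ ·) A := by
    intro S hS T hT hne hsub
    exact hne (hT.2 S hS.1 hsub)
  have hspan : Ideal.span (mon k n '' A) = Ideal.span (mon k n '' 𝒢) := by
    apply le_antisymm
    · exact Ideal.span_mono (Set.image_mono fun T hT => hT.1)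
    · rw [Ideal.span_le]
      rintro _ ⟨T, hT, rfl⟩
      obtain ⟨S, hS, hsub, hmin⟩ := exists_min 𝒢 T hT
      exact (mon_mem_iff k n T A).mpr ⟨S, ⟨hS, hmin⟩, hsub⟩
  refine ⟨A, ⟨hAanti, hspan.symm⟩, ?_⟩
  rintro B ⟨hBanti, hBspan⟩
  have hspan' : Ideal.span (mon k n '' B) = Ideal.span (mon k n '' A) := by
    rw [← hBspan, hspan]
  exact Set.Subset.antisymm (antichain_span_subset k n hBanti hspan')
    (antichain_span_subset k n hAanti hspan'.symm)
end

section
/- Let k be a field and n a natural number. The map sending a simplicial complex Δ on Fin n (a set of finsets of Fin n closed under taking subsets) to its Stanley-Reisner ideal, the ideal of MvPolynomial (Fin n) k generated by {mon N : N ∉ Δ}, is a bijection from the set of all simplicial complexes on Fin n onto the set of all ideals of MvPolynomial (Fin n) k that are generated by squarefree monomials; its inverse sends an ideal I to its Stanley-Reisner complex {F : Finset (Fin n) | mon F ∉ I}. -/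
/-- The Stanley-Reisner ideal of a set `Δ` of finsets of `Fin n`. -/
noncomputable def srIdeal (k : Type*) [Field k] (n : ℕ) (Δ : Set (Finset (Fin n))) :
    Ideal (MvPolynomial (Fin n) k) :=
  Ideal.span (mon k n '' {N | N ∉ Δ})

/-- The Stanley-Reisner complex of an ideal `I` of `MvPolynomial (Fin n) k`. -/
def srComplex (k : Type*) [Field k] (n : ℕ) (I : Ideal (MvPolynomial (Fin n) k)) :
    Set (Finset (Fin n)) :=
  {F | mon k n F ∉ I}

namespace MvPolynomial

open Finsupp

variable {σ R : Type*} [CommSemiring R]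

theorem sum_single_one_le_sum_single_one_iff {s t : Finset σ} :
    ∑ i ∈ s, single i 1 ≤ ∑ i ∈ t, single i 1 ↔ s ⊆ t := by
  classical
  rw [← orderIsoMultiset.le_iff_le, coe_orderIsoMultiset, toMultiset_sum_single,
    toMultiset_sum_single, one_nsmul, one_nsmul, Finset.val_le_iff]

theorem prod_X_eq_monomial (s : Finset σ) :
    ∏ i ∈ s, X i = monomial (∑ i ∈ s, single i 1) (1 : R) :=
  (monomial_sum_one s _).symm

theorem prod_X_mem_span_prod_X_iff [Nontrivial R] {s : Finset σ} {𝒢 : Set (Finset σ)} :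
    ∏ i ∈ s, X i ∈ Ideal.span ((fun t => ∏ i ∈ t, X i) '' 𝒢 : Set (MvPolynomial σ R)) ↔
      ∃ t ∈ 𝒢, t ⊆ s := by
  classical
  simp_rw [prod_X_eq_monomial]
  rw [← Set.image_image (fun e => monomial e (1 : R)), mem_ideal_span_monomial_image,
    support_monomial, if_neg one_ne_zero]
  simp [sum_single_one_le_sum_single_one_iff]

end MvPolynomial

section StanleyReisner

variable {k : Type*} [Field k] {n : ℕ}

theorem mon_mem_span_mon_iff {F : Finset (Fin n)} {𝒢 : Set (Finset (Fin n))} :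
    mon k n F ∈ Ideal.span (mon k n '' 𝒢) ↔ ∃ G ∈ 𝒢, G ⊆ F :=
  MvPolynomial.prod_X_mem_span_prod_X_iff

theorem isLowerSet_srComplex (I : Ideal (MvPolynomial (Fin n) k)) :
    IsLowerSet (srComplex k n I) := fun _ _ hBA hA hB =>
  hA (I.mem_of_dvd (Finset.prod_dvd_prod_of_subset _ _ _ hBA) hB)

theorem srComplex_srIdeal {Δ : Set (Finset (Fin n))} (hΔ : IsLowerSet Δ) :
    srComplex k n (srIdeal k n Δ) = Δ := by
  ext F
  simp only [srComplex, srIdeal, Set.mem_ofPred_eq, mon_mem_span_mon_iff, not_exists, not_and]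
  exact ⟨fun h => not_not.mp fun hF => h F hF subset_rfl, fun hF N hN hNF => hN (hΔ hNF hF)⟩

theorem srIdeal_srComplex_span_mon (𝒢 : Set (Finset (Fin n))) :
    srIdeal k n (srComplex k n (Ideal.span (mon k n '' 𝒢))) = Ideal.span (mon k n '' 𝒢) := by
  refine le_antisymm (Ideal.span_le.mpr ?_) (Ideal.span_mono (Set.image_mono fun G hG => ?_))
  · rintro _ ⟨N, hN, rfl⟩
    exact not_not.mp hN
  · exact not_not.mpr (Ideal.subset_span ⟨G, hG, rfl⟩)

end StanleyReisner

theorem stanleyReisner_bijection (k : Type*) [Field k] (n : ℕ) :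
    Set.BijOn (srIdeal k n)
      {Δ : Set (Finset (Fin n)) | ∀ A ∈ Δ, ∀ B ⊆ A, B ∈ Δ}
      {I : Ideal (MvPolynomial (Fin n) k) |
        ∃ 𝒢 : Set (Finset (Fin n)), I = Ideal.span (mon k n '' 𝒢)} ∧
    (∀ Δ : Set (Finset (Fin n)), (∀ A ∈ Δ, ∀ B ⊆ A, B ∈ Δ) →
      srComplex k n (srIdeal k n Δ) = Δ) ∧
    (∀ I : Ideal (MvPolynomial (Fin n) k),
      (∃ 𝒢 : Set (Finset (Fin n)), I = Ideal.span (mon k n '' 𝒢)) →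
      srIdeal k n (srComplex k n I) = I) := by
  have isLowerSet_iff (Δ : Set (Finset (Fin n))) : (∀ A ∈ Δ, ∀ B ⊆ A, B ∈ Δ) ↔ IsLowerSet Δ :=
    ⟨fun h _ _ hBA hA => h _ hA _ hBA, fun h _ hA _ hBA => h hBA hA⟩
  simp only [isLowerSet_iff]
  have leftInv : Set.LeftInvOn (srComplex k n) (srIdeal k n) {Δ | IsLowerSet Δ} :=
    fun _ hΔ => srComplex_srIdeal hΔ
  have rightInv : Set.RightInvOn (srComplex k n) (srIdeal k n)
      {I | ∃ 𝒢, I = Ideal.span (mon k n '' 𝒢)} := by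
    rintro _ ⟨𝒢, rfl⟩
    exact srIdeal_srComplex_span_mon 𝒢
  exact ⟨Set.InvOn.bijOn ⟨leftInv, rightInv⟩ (fun Δ _ => ⟨_, rfl⟩)
    (fun I _ => isLowerSet_srComplex I), leftInv, rightInv⟩
end
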